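/- Let (μ*, λ*, x*) be a 2D-eigentriplet of Hermitian (A, C): (A - μ*C)x* = λ*x*, x*^H C x* = 0, ‖x*‖ = 1. Let x̃ ∈ ℂ^n satisfy x̃^H C x̃ = 0 and ‖x̃‖ = 1, and set ε = ‖x* - x̃‖. Then |x̃^H A x̃ - λ*| ≤ ‖A - μ*C - λ*I‖ · ε². -/

import Mathlib

/-!
With `B = A - μ*C - λ*I`, the eigen-equation says `B x* = 0`, and `B` is Hermitian, so the
quadratic form of `B` takes the same value at `x̃` and at `x* - x̃` (the cross terms are
`x*ᴴ B (⋯) = (B x*)ᴴ (⋯) = 0`). Since `x̃` is a unit vector isotropic for `C`,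
`x̃ᴴ B x̃ = x̃ᴴ A x̃ - λ*`; Cauchy–Schwarz and the operator-norm bound finish the proof.
-/

open Matrix

noncomputable def enorm' {m : ℕ} (x : Fin m → ℂ) : ℝ :=
  Real.sqrt (star x ⬝ᵥ x).re

noncomputable def mnorm {m k : ℕ} (M : Matrix (Fin m) (Fin k) ℂ) : ℝ :=
  sSup {r | ∃ z : Fin k → ℂ, enorm' z = 1 ∧ r = enorm' (M *ᵥ z)}

open scoped Matrix.Norms.L2Operator

theorem enorm'_eq_norm {m : ℕ} (x : Fin m → ℂ) :
    enorm' x = ‖(EuclideanSpace.equiv (Fin m) ℂ).symm x‖ := by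
  rw [norm_eq_sqrt_re_inner (𝕜 := ℂ), EuclideanSpace.inner_eq_star_dotProduct, dotProduct_comm]
  rfl

theorem norm_star_dotProduct_le {m : ℕ} (x y : Fin m → ℂ) :
    ‖star x ⬝ᵥ y‖ ≤ enorm' x * enorm' y := by
  rw [enorm'_eq_norm, enorm'_eq_norm, dotProduct_comm, ← EuclideanSpace.inner_eq_star_dotProduct]
  exact norm_inner_le_norm _ _

theorem enorm'_mulVec_le_l2_opNorm {m k : ℕ} (M : Matrix (Fin m) (Fin k) ℂ) (z : Fin k → ℂ) :
    enorm' (M *ᵥ z) ≤ ‖M‖ * enorm' z := by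
  rw [enorm'_eq_norm, enorm'_eq_norm]
  exact M.l2_opNorm_mulVec _

theorem l2_opNorm_le_mnorm {m k : ℕ} (M : Matrix (Fin m) (Fin k) ℂ) : ‖M‖ ≤ mnorm M := by
  have hbdd : BddAbove {r | ∃ z : Fin k → ℂ, enorm' z = 1 ∧ r = enorm' (M *ᵥ z)} := by
    refine ⟨‖M‖, ?_⟩
    rintro _ ⟨z, hz, rfl⟩
    simpa [hz] using enorm'_mulVec_le_l2_opNorm M z
  refine ContinuousLinearMap.opNorm_le_of_unit_norm
    (Real.sSup_nonneg fun _ ⟨_, _, hr⟩ => hr ▸ Real.sqrt_nonneg _) fun z hz => ?_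
  refine le_csSup hbdd ⟨z.ofLp, by rwa [enorm'_eq_norm], ?_⟩
  rw [enorm'_eq_norm]
  rfl

theorem enorm'_mulVec_le {m k : ℕ} (M : Matrix (Fin m) (Fin k) ℂ) (z : Fin k → ℂ) :
    enorm' (M *ᵥ z) ≤ mnorm M * enorm' z :=
  (enorm'_mulVec_le_l2_opNorm M z).trans
    (mul_le_mul_of_nonneg_right (l2_opNorm_le_mnorm M) (Real.sqrt_nonneg _))

namespace Matrix

variable {n R : Type*} [Fintype n] [CommRing R] [StarRing R]

theorem IsHermitian.star_dotProduct_mulVec_sub_of_mulVec_eq_zero {B : Matrix n n R}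
    (hB : B.IsHermitian) {x : n → R} (hx : B *ᵥ x = 0) (y : n → R) :
    star (x - y) ⬝ᵥ (B *ᵥ (x - y)) = star y ⬝ᵥ (B *ᵥ y) := by
  have hxB : star x ᵥ* B = 0 := by
    simpa only [star_mulVec, hB.eq, star_zero] using congrArg star hx
  rw [mulVec_sub, hx, zero_sub, star_sub, dotProduct_neg, sub_dotProduct, dotProduct_mulVec,
    hxB, zero_dotProduct, zero_sub, neg_neg]

theorem star_dotProduct_sub_smul_sub_smul_one_mulVec [DecidableEq n] (A C : Matrix n n R)
    (μ c : R) {x : n → R} (hCx : star x ⬝ᵥ (C *ᵥ x) = 0) (hx : star x ⬝ᵥ x = 1) :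
    star x ⬝ᵥ ((A - μ • C - c • 1) *ᵥ x) = star x ⬝ᵥ (A *ᵥ x) - c := by
  simp only [sub_mulVec, smul_mulVec, one_mulVec, dotProduct_sub, dotProduct_smul, hCx, hx,
    smul_eq_mul, mul_zero, sub_zero, mul_one]

end Matrix

theorem norm_star_dotProduct_mulVec_le {m : ℕ} (M : Matrix (Fin m) (Fin m) ℂ) (x : Fin m → ℂ) :
    ‖star x ⬝ᵥ (M *ᵥ x)‖ ≤ mnorm M * enorm' x ^ 2 :=
  calc ‖star x ⬝ᵥ (M *ᵥ x)‖ ≤ enorm' x * enorm' (M *ᵥ x) := norm_star_dotProduct_le _ _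
    _ ≤ enorm' x * (mnorm M * enorm' x) :=
      mul_le_mul_of_nonneg_left (enorm'_mulVec_le M x) (Real.sqrt_nonneg _)
    _ = mnorm M * enorm' x ^ 2 := by ring

theorem rayleigh_quotient_second_order_general {n : ℕ}
    (A C : Matrix (Fin n) (Fin n) ℂ) (hA : A.IsHermitian) (hC : C.IsHermitian)
    (μs lams : ℝ) (xs xt : Fin n → ℂ)
    (heig : (A - (μs : ℂ) • C) *ᵥ xs = (lams : ℂ) • xs)
    (hisot : star xt ⬝ᵥ (C *ᵥ xt) = 0)
    (hunitt : star xt ⬝ᵥ xt = 1) :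
    ‖star xt ⬝ᵥ (A *ᵥ xt) - (lams : ℂ)‖ ≤
      mnorm (A - (μs : ℂ) • C - (lams : ℂ) • 1) * enorm' (xs - xt) ^ 2 := by
  set B := A - (μs : ℂ) • C - (lams : ℂ) • 1
  have hB : B.IsHermitian :=
    (hA.sub (hC.smul (Complex.conj_ofReal μs))).sub
      (isHermitian_one.smul (Complex.conj_ofReal lams))
  have hBxs : B *ᵥ xs = 0 := by
    rw [sub_mulVec, heig, smul_mulVec, one_mulVec, sub_self]
  rw [← star_dotProduct_sub_smul_sub_smul_one_mulVec A C _ _ hisot hunitt,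
    ← hB.star_dotProduct_mulVec_sub_of_mulVec_eq_zero hBxs]
  exact norm_star_dotProduct_mulVec_le B (xs - xt)

theorem rayleigh_quotient_second_order {n : ℕ}
    (A C : Matrix (Fin n) (Fin n) ℂ) (hA : A.IsHermitian) (hC : C.IsHermitian)
    (μs lams : ℝ) (xs xt : Fin n → ℂ)
    (heig : (A - (μs : ℂ) • C) *ᵥ xs = (lams : ℂ) • xs)
    (hisos : star xs ⬝ᵥ (C *ᵥ xs) = 0)
    (hunits : star xs ⬝ᵥ xs = 1)
    (hisot : star xt ⬝ᵥ (C *ᵥ xt) = 0)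
    (hunitt : star xt ⬝ᵥ xt = 1) :
    ‖star xt ⬝ᵥ (A *ᵥ xt) - (lams : ℂ)‖ ≤
      mnorm (A - (μs : ℂ) • C - (lams : ℂ) • 1) * enorm' (xs - xt) ^ 2 :=
  rayleigh_quotient_second_order_general A C hA hC μs lams xs xt heig hisot hunitt
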